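/- Let d be a square free positive integer with Ω(d) ≥ 2 and let q ≥ 17 be a prime with q ∤ d. Then Mref₃(d)/M₃(d) ≥ Mref₃(d·q)/M₃(d·q). -/
import Mathlib


open Real Finset

/-- The lower bound `M(d)` for the mass of a strongly square free ternary lattice of
determinant `d` (Lemma 3.3(a)). -/
noncomputable def M3 (d : ℕ) : ℝ :=
  (1 / 48) * ∏ p ∈ d.primeFactors.erase 2, (((p : ℝ) - 1) / 2)

/-- The upper bound `Mref(d)` for the reflective part of the mass of a strongly square free
ternary lattice of determinant `d` (Lemma 3.5(a)). -/
noncomputable def Mref3 (d : ℕ) : ℝ :=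
  ∑ x ∈ d.divisors,
    (2 / π) * (1 + Real.log x / 2) * ∏ p ∈ x.primeFactors, ((1 : ℝ) / 2) * Real.sqrt p

/-- Lemma 3.6(a): appending a new prime `q ≥ 17` to a square free determinant `d` with
`Ω(d) ≥ 2` does not increase the ratio `Mref/M` in dimension 3. -/
noncomputable def S3 (d : ℕ) : ℝ :=
  ∑ x ∈ d.divisors, (2 / π) * ∏ p ∈ x.primeFactors, ((1 : ℝ) / 2) * Real.sqrt p

lemma key_num (q : ℝ) (hq : 17 ≤ q) :
    Real.sqrt q * Real.log q ≤ 2*q - 6 - 2*Real.sqrt q := by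
  set t := Real.sqrt (Real.sqrt q) with ht
  have hq0 : (0:ℝ) < q := by linarith
  have ht0 : 0 ≤ t := Real.sqrt_nonneg _
  have h1 : Real.sqrt q = t^2 := (Real.sq_sqrt (Real.sqrt_nonneg q)).symm
  have h2 : q = t^4 := by
    have : (t^2)^2 = q := by rw [← h1]; exact Real.sq_sqrt hq0.le
    nlinarith [this]
  have ht2 : 2 ≤ t := by
    by_contra h
    push_neg at h
    have h4 : t^4 ≤ 2^4 := pow_le_pow_left₀ ht0 h.le 4
    norm_num at h4
    linarith [h2 ▸ hq]
  have hlog : Real.log q = 4 * Real.log t := by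
    rw [h2, Real.log_pow]; push_cast; ring
  have hlt : Real.log t ≤ t - 1 := Real.log_le_sub_one_of_pos (by linarith)
  have hl0 : 0 ≤ Real.log t := Real.log_nonneg (by linarith)
  rw [h1, hlog, h2]
  nlinarith [mul_nonneg (mul_nonneg ht0 ht0) hl0,
    mul_le_mul_of_nonneg_left hlt (by positivity : (0:ℝ) ≤ 4*t^2),
    mul_nonneg (mul_nonneg (mul_nonneg ht0 ht0) ht0) (by linarith : (0:ℝ) ≤ t - 2)]

lemma divisors_mul_prime (d q : ℕ) (hd : 0 < d) (hq : q.Prime) :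
    (d * q).divisors = d.divisors ∪ d.divisors.image (· * q) := by
  have hq0 : q ≠ 0 := hq.pos.ne'
  have hdq : d * q ≠ 0 := by positivity
  ext x
  simp only [Nat.mem_divisors, Finset.mem_union, Finset.mem_image]
  constructor
  · rintro ⟨hx, -⟩
    by_cases h : q ∣ x
    · obtain ⟨y, rfl⟩ := h
      right
      refine ⟨y, ⟨?_, hd.ne'⟩, (mul_comm y q)⟩
      have : y * q ∣ d * q := by rwa [mul_comm q y] at hx
      exact (mul_dvd_mul_iff_right hq0).mp this
    · left
      refine ⟨(Nat.Coprime.dvd_of_dvd_mul_right ?_ hx), hd.ne'⟩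
      exact (Nat.coprime_comm.mp ((hq.coprime_iff_not_dvd).mpr h))
  · rintro (⟨hx, -⟩ | ⟨y, ⟨hy, -⟩, rfl⟩)
    · exact ⟨hx.mul_right q, hdq⟩
    · exact ⟨mul_dvd_mul_right hy q, hdq⟩

lemma disj_div (d q : ℕ) (hqd : ¬ q ∣ d) :
    Disjoint d.divisors (d.divisors.image (· * q)) := by
  rw [Finset.disjoint_left]
  rintro x hx hx'
  obtain ⟨y, hy, rfl⟩ := Finset.mem_image.mp hx'
  exact hqd ((dvd_mul_left q y).trans (Nat.mem_divisors.mp hx).1)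

lemma Mref3_mul_prime (d q : ℕ) (hd : 0 < d) (hq : q.Prime) (hqd : ¬ q ∣ d) :
    Mref3 (d * q) = Mref3 d + (Real.sqrt q / 2) * Mref3 d
      + (Real.sqrt q * Real.log q / 4) * S3 d := by
  have hq0 : q ≠ 0 := hq.pos.ne'
  rw [Mref3, divisors_mul_prime d q hd hq,
    Finset.sum_union (disj_div d q hqd),
    Finset.sum_image (fun x _ y _ h => Nat.eq_of_mul_eq_mul_right hq.pos h)]
  have hterm : ∀ x ∈ d.divisors,
      (2 / π) * (1 + Real.log (↑(x * q)) / 2)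
        * ∏ p ∈ (x * q).primeFactors, ((1 : ℝ) / 2) * Real.sqrt p
      = (Real.sqrt q / 2) * ((2 / π) * (1 + Real.log x / 2)
            * ∏ p ∈ x.primeFactors, ((1 : ℝ) / 2) * Real.sqrt p)
        + (Real.sqrt q * Real.log q / 4)
            * ((2 / π) * ∏ p ∈ x.primeFactors, ((1 : ℝ) / 2) * Real.sqrt p) := by
    intro x hx
    obtain ⟨hxd, -⟩ := Nat.mem_divisors.mp hx
    have hx0 : x ≠ 0 := fun h => hd.ne' (by simpa [h] using hxd)
    have hqx : q ∉ x.primeFactors := fun h =>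
      hqd ((Nat.dvd_of_mem_primeFactors h).trans hxd)
    have hpf : (x * q).primeFactors = insert q x.primeFactors := by
      rw [Nat.primeFactors_mul hx0 hq0, hq.primeFactors, Finset.union_comm,
        ← Finset.insert_eq]
    have hlogm : Real.log (↑(x * q)) = Real.log x + Real.log q := by
      push_cast
      exact Real.log_mul (by exact_mod_cast hx0) (by exact_mod_cast hq0)
    rw [hpf, Finset.prod_insert hqx, hlogm]
    ring
  rw [Finset.sum_congr rfl hterm, Finset.sum_add_distrib, ← Finset.mul_sum,
    ← Finset.mul_sum]
  rw [Mref3, S3]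
  ring

lemma M3_mul_prime (d q : ℕ) (hd : 0 < d) (hq : q.Prime) (hq17 : 17 ≤ q)
    (hqd : ¬ q ∣ d) : M3 (d * q) = (((q : ℝ) - 1) / 2) * M3 d := by
  have hq0 : q ≠ 0 := hq.pos.ne'
  have hq2 : q ≠ 2 := by omega
  have hqpf : q ∉ d.primeFactors := fun h => hqd (Nat.dvd_of_mem_primeFactors h)
  have hpf : (d * q).primeFactors = insert q d.primeFactors := by
    rw [Nat.primeFactors_mul hd.ne' hq0, hq.primeFactors, Finset.union_comm,
      ← Finset.insert_eq]
  rw [M3, hpf, Finset.erase_insert_of_ne hq2,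
    Finset.prod_insert (fun h => hqpf (Finset.mem_of_mem_erase h)), M3]
  ring

lemma M3_pos (d : ℕ) : 0 < M3 d := by
  rw [M3]
  apply mul_pos (by norm_num)
  apply Finset.prod_pos
  intro p hp
  have := (Nat.prime_of_mem_primeFactors (Finset.mem_of_mem_erase hp)).two_le
  have : (2:ℝ) ≤ p := by exact_mod_cast this
  linarith

lemma S3_nonneg (d : ℕ) : 0 ≤ S3 d := by
  apply Finset.sum_nonneg
  intro x hx
  have : (0:ℝ) < π := Real.pi_pos
  positivity

lemma S3_le_Mref3 (d : ℕ) (hd : 0 < d) : S3 d ≤ Mref3 d := by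
  apply Finset.sum_le_sum
  intro x hx
  have hx1 : 1 ≤ x := Nat.one_le_iff_ne_zero.mpr (Nat.pos_of_mem_divisors hx).ne'
  have hl : (0:ℝ) ≤ Real.log x := Real.log_nonneg (by exact_mod_cast hx1)
  have hπ : (0:ℝ) < π := Real.pi_pos
  have hP : (0:ℝ) ≤ ∏ p ∈ x.primeFactors, ((1 : ℝ) / 2) * Real.sqrt p := by
    apply Finset.prod_nonneg; intro p _; positivity
  have h2 : (0:ℝ) < 2 / π := by positivity
  nlinarith [mul_nonneg (mul_nonneg h2.le hl) hP]

theorem ratio_le_append_prime_dim3 (d : ℕ) (hd : 0 < d) (hsf : Squarefree d)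
    (hΩ : 2 ≤ d.primeFactorsList.length) (q : ℕ) (hq : q.Prime) (hq17 : 17 ≤ q)
    (hqd : ¬ q ∣ d) :
    Mref3 (d * q) / M3 (d * q) ≤ Mref3 d / M3 d := by
  have hqR : (17:ℝ) ≤ q := by exact_mod_cast hq17
  have hM3q : M3 (d * q) = (((q : ℝ) - 1) / 2) * M3 d := M3_mul_prime d q hd hq hq17 hqd
  have hMd : 0 < M3 d := M3_pos d
  have hMdq : 0 < M3 (d * q) := M3_pos _
  rw [div_le_div_iff₀ hMdq hMd]
  rw [hM3q, Mref3_mul_prime d q hd hq hqd]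
  have hS0 : 0 ≤ S3 d := S3_nonneg d
  have hSM : S3 d ≤ Mref3 d := S3_le_Mref3 d hd
  have hMref0 : 0 ≤ Mref3 d := le_trans hS0 hSM
  have hkey : Real.sqrt q * Real.log q ≤ 2*(q:ℝ) - 6 - 2*Real.sqrt q := key_num _ hqR
  have hsq0 : 0 ≤ Real.sqrt (q:ℝ) := Real.sqrt_nonneg _
  have hlq0 : 0 ≤ Real.log (q:ℝ) := Real.log_nonneg (by linarith)
  have hcoef : 0 ≤ Real.sqrt (q:ℝ) * Real.log (q:ℝ) / 4 := by positivity
  have h1 : (Real.sqrt (q:ℝ) * Real.log q / 4) * S3 d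
      ≤ (Real.sqrt (q:ℝ) * Real.log q / 4) * Mref3 d :=
    mul_le_mul_of_nonneg_left hSM hcoef
  have h2 : (Real.sqrt (q:ℝ) * Real.log q) * Mref3 d
      ≤ (2*(q:ℝ) - 6 - 2*Real.sqrt q) * Mref3 d :=
    mul_le_mul_of_nonneg_right hkey hMref0
  have hcore : Mref3 d + (Real.sqrt q / 2) * Mref3 d
      + (Real.sqrt q * Real.log q / 4) * S3 d ≤ (((q:ℝ) - 1) / 2) * Mref3 d := by
    nlinarith [h1, h2]
  calc (Mref3 d + (Real.sqrt q / 2) * Mref3 d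
      + (Real.sqrt q * Real.log q / 4) * S3 d) * M3 d
      ≤ ((((q:ℝ) - 1) / 2) * Mref3 d) * M3 d :=
        mul_le_mul_of_nonneg_right hcore hMd.le
    _ = Mref3 d * ((((q:ℝ) - 1) / 2) * M3 d) := by ring
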